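/- arXiv:1205.6422 — 2 statements merged into one kernel-verified Lean document; each statement's English description precedes it below -/
import Mathlib

section
/- Let X be a locally pseudocompact Tychonoff space. Then ζX is the largest, with respect to the partial order ≤, among all pseudocompactifications of X with compact remainder; that is, ζX is itself a pseudocompactification of X with compact remainder, and for every pseudocompactification Y of X with compact remainder there exists a continuous map from ζX onto a subspace of Y fixing X pointwise, so Y ≤ ζX. -/
open Set Topology

/-- A zero-set: the preimage of `{0}` under a continuous real-valued function. -/
def IsZeroSet {Y : Type*} [TopologicalSpace Y] (Z : Set Y) : Prop :=
  ∃ f : C(Y, ℝ), Z = f ⁻¹' {0}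

/-- A cozero-set: the complement of a zero-set. -/
def IsCozeroSet {Y : Type*} [TopologicalSpace Y] (C : Set Y) : Prop :=
  IsZeroSet Cᶜ

/-- A space is pseudocompact if every continuous real-valued function on it is bounded. -/
def IsPseudocompact (Y : Type*) [TopologicalSpace Y] : Prop :=
  ∀ f : C(Y, ℝ), ∃ M : ℝ, ∀ y, |f y| ≤ M

/-- A subset is pseudocompact if it is pseudocompact as a subspace. -/
def IsPseudocompactSet {Y : Type*} [TopologicalSpace Y] (A : Set Y) : Prop :=
  ∀ f : C(A, ℝ), ∃ M : ℝ, ∀ a, |f a| ≤ M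

/-- The Hewitt realcompactification `υX`, realized as the subspace of `βX` consisting of
those `p ∈ βX` such that every zero-set of `βX` containing `p` meets `X`. -/
def upsilonSet (X : Type*) [TopologicalSpace X] : Set (StoneCech X) :=
  {p | ∀ Z : Set (StoneCech X), IsZeroSet Z → p ∈ Z →
    (Z ∩ Set.range (stoneCechUnit : X → StoneCech X)).Nonempty}

/-- `ζX = X ∪ cl_{βX}(βX \ υX)`, as a subset of `βX`. -/
def zetaSet (X : Type*) [TopologicalSpace X] : Set (StoneCech X) :=
  Set.range (stoneCechUnit : X → StoneCech X) ∪ closure (upsilonSet X)ᶜ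

/-!
Every `x ∈ X` has a neighbourhood `W` in `βX` whose trace on `X` has pseudocompact closure; a
zero-set of `βX` through a point of `W` and missing `X` would give an unbounded function on that
closure, so `W ⊆ υX`. Hence `X` misses `cl(βX \ υX)`, which is the compact remainder of `ζX`.

Any `T` with `X ⊆ T ⊆ βX` and `βX \ υX ⊆ T` is pseudocompact: for `f` on `T`, the extension
`H` to `βX` of `1 / (1 + |f|)` agrees with it on `T`, and it cannot vanish off `T`, since its
zero-set misses `X`. So `1 / H` is bounded on the compact `βX`, and so is `f`.

For a pseudocompactification `e : X → Y` with compact remainder, `βe : βX → βY` maps each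
`r ∉ υX` into the remainder `Y \ e(X)`: otherwise a zero-set of `βX` through `r` missing `X`
and an Urysohn function separating `βe r` from the remainder combine into an unbounded
continuous function on `Y`. As the remainder is compact, `βe` maps all of `ζX` into `Y`.
-/

section

variable {X : Type*} [TopologicalSpace X]

theorem IsPseudocompactSet.exists_pos_le_abs {A : Set X} (hA : IsPseudocompactSet A)
    {f : X → ℝ} (hf : Continuous f) (hf0 : ∀ a ∈ A, f a ≠ 0) :
    ∃ c > 0, ∀ a ∈ A, c ≤ |f a| := by
  obtain ⟨M, hM⟩ := hA ⟨fun a => |f a|⁻¹,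
    (hf.comp continuous_subtype_val).abs.inv₀ fun a => abs_ne_zero.2 (hf0 a a.2)⟩
  refine ⟨(max M 0 + 1)⁻¹, by positivity, fun a ha => ?_⟩
  have hpos : 0 < |f a| := abs_pos.2 (hf0 a ha)
  have hinv : |f a|⁻¹ ≤ max M 0 + 1 :=
    ((le_abs_self _).trans (hM ⟨a, ha⟩)).trans (by linarith [le_max_left M 0])
  exact inv_le_of_inv_le₀ hpos hinv

theorem notMem_upsilonSet_iff {p : StoneCech X} :
    p ∉ upsilonSet X ↔ ∃ k : C(StoneCech X, ℝ), k p = 0 ∧ ∀ x, k (stoneCechUnit x) ≠ 0 := by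
  simp only [upsilonSet, mem_ofPred_eq, IsZeroSet, not_forall, not_nonempty_iff_eq_empty,
    exists_prop]
  constructor
  · rintro ⟨_, ⟨k, rfl⟩, hkp, hkX⟩
    exact ⟨k, hkp, fun x hx => (eq_empty_iff_forall_notMem.1 hkX) _ ⟨hx, x, rfl⟩⟩
  · rintro ⟨k, hkp, hkX⟩
    refine ⟨_, ⟨k, rfl⟩, hkp, eq_empty_iff_forall_notMem.2 ?_⟩
    rintro _ ⟨hk, x, rfl⟩
    exact hkX x hk

theorem closure_image_stoneCechUnit_subset_upsilonSet {U : Set X}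
    (hU : IsPseudocompactSet (closure U)) :
    closure (stoneCechUnit '' U) ⊆ upsilonSet X := by
  intro p hp
  by_contra hpυ
  obtain ⟨k, hkp, hkX⟩ := notMem_upsilonSet_iff.1 hpυ
  obtain ⟨c, hc, hck⟩ := hU.exists_pos_le_abs (k.continuous.comp continuous_stoneCechUnit)
    fun a _ => hkX a
  have hbound : closure (stoneCechUnit '' U) ⊆ {t | c ≤ |k t|} :=
    closure_minimal (image_subset_iff.2 fun a ha => hck a (subset_closure ha))
      (isClosed_le continuous_const k.continuous.abs)
  have := hbound hp
  simp only [mem_ofPred_eq, hkp, abs_zero] at this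
  linarith

theorem disjoint_range_stoneCechUnit_closure_compl_upsilonSet [CompletelyRegularSpace X]
    (hlp : ∀ x : X, ∃ U : Set X, IsOpen U ∧ x ∈ U ∧ IsPseudocompactSet (closure U)) :
    Disjoint (range stoneCechUnit) (closure (upsilonSet X)ᶜ) := by
  rw [disjoint_left]
  rintro _ ⟨x, rfl⟩
  obtain ⟨U, hUo, hxU, hU⟩ := hlp x
  obtain ⟨W, hWo, rfl⟩ := isInducing_stoneCechUnit.isOpen_iff.1 hUo
  have hWυ : W ⊆ upsilonSet X := by
    have := denseRange_stoneCechUnit.open_subset_closure_inter hWo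
    rw [inter_comm, ← image_preimage_eq_range_inter] at this
    exact this.trans (closure_image_stoneCechUnit_subset_upsilonSet hU)
  exact disjoint_left.1 ((disjoint_compl_right_iff_subset.2 hWυ).closure_right hWo) hxU

theorem isPseudocompactSet_of_compl_upsilonSet_subset {T : Set (StoneCech X)}
    (hXT : range stoneCechUnit ⊆ T) (hυT : (upsilonSet X)ᶜ ⊆ T) : IsPseudocompactSet T := by
  intro f
  let ι : X → T := fun x => ⟨stoneCechUnit x, hXT (mem_range_self x)⟩
  have hι : DenseRange ι := Subtype.dense_iff.2 <| by
    rw [← range_comp]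
    exact fun t _ => denseRange_stoneCechUnit (t : StoneCech X)
  let r : ℝ → unitInterval := fun a =>
    ⟨(1 + |a|)⁻¹, by positivity, inv_le_one_of_one_le₀ (by linarith [abs_nonneg a])⟩
  have hr : Continuous r := Continuous.subtype_mk
    ((continuous_const.add continuous_abs).inv₀ fun a => (by positivity : (0 : ℝ) < 1 + |a|).ne') _
  have hg : Continuous (r ∘ f ∘ ι) :=
    hr.comp (f.continuous.comp (continuous_stoneCechUnit.subtype_mk _))
  let H : StoneCech X → ℝ := fun p => ((stoneCechExtend hg p : unitInterval) : ℝ)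
  have hHc : Continuous H := continuous_subtype_val.comp (continuous_stoneCechExtend hg)
  have hHT : ∀ t : T, H t = (1 + |f t|)⁻¹ := congrFun <|
    hι.equalizer (hHc.comp continuous_subtype_val)
      (continuous_subtype_val.comp (hr.comp f.continuous)) <|
      funext fun x => congrArg Subtype.val (stoneCechExtend_stoneCechUnit hg x)
  have hH0 : ∀ p, H p ≠ 0 := by
    intro p hp
    by_cases hpT : p ∈ T
    · rw [hHT ⟨p, hpT⟩] at hp
      exact (by positivity : (0 : ℝ) < (1 + |f ⟨p, hpT⟩|)⁻¹).ne' hp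
    · refine notMem_upsilonSet_iff.2 ⟨⟨H, hHc⟩, hp, fun x => ?_⟩ (not_not.1 (hpT ∘ @hυT p))
      exact (hHT (ι x)).trans_ne (by positivity)
  let B : C(StoneCech X, ℝ) := ⟨fun p => (H p)⁻¹, hHc.inv₀ hH0⟩
  refine ⟨‖B‖, fun t => ?_⟩
  calc |f t| ≤ 1 + |f t| := by linarith
    _ = B t := by simp [B, hHT t]
    _ ≤ ‖B‖ := (le_abs_self _).trans (B.norm_coe_le_norm t)

theorem Topology.IsOpenEmbedding.continuous_extend_zero {Y Z : Type*} [TopologicalSpace Y]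
    [TopologicalSpace Z] [Zero Z] {e : X → Y} (he : IsOpenEmbedding e) {φ : X → Z}
    (hφ : Continuous φ) {O : Set Y} (hO : IsOpen O) (hOe : (range e)ᶜ ⊆ O)
    (hφO : ∀ x, e x ∈ O → φ x = 0) : Continuous (Function.extend e φ 0) := by
  have hzero : EqOn (Function.extend e φ 0) 0 O := by
    intro y hy
    by_cases hye : y ∈ range e
    · obtain ⟨x, rfl⟩ := hye
      rw [he.injective.extend_apply]
      exact hφO x hy
    · exact Function.extend_apply' _ _ _ fun ⟨x, hx⟩ => hye ⟨x, hx⟩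
  refine continuous_iff_continuousAt.2 fun y => ?_
  by_cases hye : y ∈ range e
  · obtain ⟨x, rfl⟩ := hye
    rw [← he.continuousAt_iff, Function.extend_comp he.injective]
    exact hφ.continuousAt
  · exact Filter.EventuallyEq.continuousAt
      (Filter.eventually_of_mem (hO.mem_nhds (hOe hye)) hzero)

theorem Topology.IsEmbedding.exists_continuous_comp_eq_of_range_subset {Z A B : Type*}
    [TopologicalSpace Z] [TopologicalSpace A] [TopologicalSpace B] {i : A → B}
    (hi : IsEmbedding i) {f : Z → B} (hf : Continuous f) (hfi : range f ⊆ range i) :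
    ∃ g : Z → A, Continuous g ∧ i ∘ g = f := by
  choose g hg using fun z => hfi (mem_range_self z)
  have hig : i ∘ g = f := funext hg
  exact ⟨g, hi.continuous_iff.2 (hig ▸ hf), hig⟩

theorem stoneCechExtend_mapsTo_compl_upsilonSet {Y : Type*} [TopologicalSpace Y] {e : X → Y}
    (he : IsOpenEmbedding e) (hK : IsCompact (range e)ᶜ) (hY : IsPseudocompact Y) :
    MapsTo (stoneCechExtend (continuous_stoneCechUnit.comp he.continuous)) (upsilonSet X)ᶜ
      (stoneCechUnit '' (range e)ᶜ) := by
  set F := stoneCechExtend (continuous_stoneCechUnit.comp he.continuous)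
  intro r hr
  by_contra hFr
  obtain ⟨u, hu0, hu1, -⟩ := exists_continuous_zero_one_of_isClosed
    (hK.image continuous_stoneCechUnit).isClosed isClosed_singleton
    (disjoint_singleton_right.2 hFr)
  obtain ⟨k, hkr, hkX⟩ := notMem_upsilonSet_iff.1 hr
  -- `φ` vanishes near the remainder of `Y`, so it extends by `0` to `Y`; near `r` its
  -- denominator tends to `0` while its numerator stays `≥ 1/4`.
  let φ : X → ℝ := fun x => max (u (stoneCechUnit (e x)) - 1 / 4) 0 / |k (stoneCechUnit x)|
  have hφ : Continuous φ :=
    ((u.continuous.comp (continuous_stoneCechUnit.comp he.continuous)).sub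
      continuous_const |>.max continuous_const).div
      (k.continuous.comp continuous_stoneCechUnit).abs fun x => abs_ne_zero.2 (hkX x)
  obtain ⟨M, hM⟩ := hY ⟨_, he.continuous_extend_zero hφ
    (isOpen_lt (u.continuous.comp continuous_stoneCechUnit) continuous_const)
    (fun y hy => show u (stoneCechUnit y) < 1 / 4 by
      rw [hu0 (mem_image_of_mem _ hy)]; norm_num)
    (fun x hx => by
      simp only [φ, max_eq_right (sub_nonpos.2 (show u (stoneCechUnit (e x)) < 1 / 4 from hx).le),
        zero_div])⟩
  set ε : ℝ := (4 * (|M| + 1))⁻¹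
  have hV : IsOpen {t | |k t| < ε ∧ 1 / 2 < u (F t)} :=
    (isOpen_lt k.continuous.abs continuous_const).inter
      (isOpen_lt continuous_const (u.continuous.comp (continuous_stoneCechExtend _)))
  have hrV : r ∈ {t | |k t| < ε ∧ 1 / 2 < u (F t)} := by
    refine ⟨by rw [hkr, abs_zero]; positivity, ?_⟩
    rw [hu1 (mem_singleton (F r))]; norm_num
  obtain ⟨x, hxk, hxu⟩ := denseRange_stoneCechUnit.exists_mem_open hV ⟨r, hrV⟩
  have hφx : φ x ≤ M := by
    have := hM (e x)
    rw [ContinuousMap.coe_mk, he.injective.extend_apply] at this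
    exact (le_abs_self _).trans this
  have hb : 0 < |k (stoneCechUnit x)| := abs_pos.2 (hkX x)
  have ha : 1 / 4 ≤ max (u (stoneCechUnit (e x)) - 1 / 4) 0 := by
    rw [show F (stoneCechUnit x) = stoneCechUnit (e x) from stoneCechExtend_stoneCechUnit _ x]
      at hxu
    exact le_max_of_le_left (by linarith)
  have hMε : |M| * ε < 1 / 4 := by
    rw [mul_inv_lt_iff₀ (by positivity)]
    linarith
  refine lt_irrefl (1 / 4 : ℝ) ?_
  calc 1 / 4 ≤ max (u (stoneCechUnit (e x)) - 1 / 4) 0 := ha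
    _ ≤ M * |k (stoneCechUnit x)| := (div_le_iff₀ hb).1 hφx
    _ ≤ |M| * ε := by gcongr; exact le_abs_self M
    _ < 1 / 4 := hMε

theorem stoneCechExtend_mapsTo_zetaSet {Y : Type*} [TopologicalSpace Y] {e : X → Y}
    (he : IsOpenEmbedding e) (hK : IsCompact (range e)ᶜ) (hY : IsPseudocompact Y) :
    MapsTo (stoneCechExtend (continuous_stoneCechUnit.comp he.continuous)) (zetaSet X)
      (range stoneCechUnit) := by
  have hc : Continuous (stoneCechUnit ∘ e) := continuous_stoneCechUnit.comp he.continuous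
  rintro p (⟨x, rfl⟩ | hp)
  · exact ⟨e x, (stoneCechExtend_stoneCechUnit hc x).symm⟩
  · have hcl : closure (upsilonSet X)ᶜ ⊆ stoneCechExtend hc ⁻¹' (stoneCechUnit '' (range e)ᶜ) :=
      closure_minimal (stoneCechExtend_mapsTo_compl_upsilonSet he hK hY)
        ((hK.image continuous_stoneCechUnit).isClosed.preimage (continuous_stoneCechExtend hc))
    exact image_subset_range _ _ (hcl hp)

end

universe u

theorem zetaSet_largest_pseudocompactification_general (X : Type u) [TopologicalSpace X]
    [CompletelyRegularSpace X]
    (hlp : ∀ x : X, ∃ U : Set X, IsOpen U ∧ x ∈ U ∧ IsPseudocompactSet (closure U)) :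
    Set.range (stoneCechUnit : X → StoneCech X) ⊆ zetaSet X ∧
    zetaSet X ⊆ closure (Set.range (stoneCechUnit : X → StoneCech X)) ∧
    IsPseudocompactSet (zetaSet X) ∧
    IsCompact (zetaSet X \ Set.range (stoneCechUnit : X → StoneCech X)) ∧
    ∀ (Y : Type u) [TopologicalSpace Y] [T2Space Y] [CompletelyRegularSpace Y]
      (e : X → Y), IsEmbedding e → DenseRange e → IsPseudocompact Y →
        IsCompact (Set.range e)ᶜ →
        ∃ g : zetaSet X → Y, Continuous g ∧
          ∀ (x : X) (hx : stoneCechUnit x ∈ zetaSet X), g ⟨stoneCechUnit x, hx⟩ = e x := by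
  refine ⟨subset_union_left, fun p _ => denseRange_stoneCechUnit p,
    isPseudocompactSet_of_compl_upsilonSet_subset subset_union_left
      (subset_closure.trans subset_union_right), ?_, ?_⟩
  · rw [zetaSet, union_sdiff_left,
      (disjoint_range_stoneCechUnit_closure_compl_upsilonSet hlp).symm.sdiff_eq_left]
    exact isClosed_closure.isCompact
  · intro Y _ _ _ e he _ hY hK
    have : T35Space Y := ⟨⟩
    have heo : IsOpenEmbedding e := ⟨he, isClosed_compl_iff.1 hK.isClosed⟩
    obtain ⟨g, hg, hgF⟩ := isEmbedding_stoneCechUnit.exists_continuous_comp_eq_of_range_subset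
      ((continuous_stoneCechExtend _).comp continuous_subtype_val)
      (range_subset_iff.2 fun z => stoneCechExtend_mapsTo_zetaSet heo hK hY z.2)
    refine ⟨g, hg, fun x hx => isEmbedding_stoneCechUnit.injective ?_⟩
    exact (congrFun hgF ⟨_, hx⟩).trans (stoneCechExtend_stoneCechUnit _ x)

/-- Let `X` be a locally pseudocompact Tychonoff space. Then `ζX` is the largest, w.r.t. the
partial order `≤` on extensions, among all pseudocompactifications of `X` with compact
remainder: `ζX` is itself a pseudocompactification of `X` with compact remainder, and for
every pseudocompactification `Y` of `X` with compact remainder there is a continuous map from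
`ζX` into `Y` fixing `X` pointwise (so `Y ≤ ζX`). -/
theorem zetaSet_largest_pseudocompactification (X : Type u) [TopologicalSpace X] [T2Space X]
    [CompletelyRegularSpace X]
    (hlp : ∀ x : X, ∃ U : Set X, IsOpen U ∧ x ∈ U ∧ IsPseudocompactSet (closure U)) :
    Set.range (stoneCechUnit : X → StoneCech X) ⊆ zetaSet X ∧
    zetaSet X ⊆ closure (Set.range (stoneCechUnit : X → StoneCech X)) ∧
    IsPseudocompactSet (zetaSet X) ∧
    IsCompact (zetaSet X \ Set.range (stoneCechUnit : X → StoneCech X)) ∧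
    ∀ (Y : Type u) [TopologicalSpace Y] [T2Space Y] [CompletelyRegularSpace Y]
      (e : X → Y), IsEmbedding e → DenseRange e → IsPseudocompact Y →
        IsCompact (Set.range e)ᶜ →
        ∃ g : zetaSet X → Y, Continuous g ∧
          ∀ (x : X) (hx : stoneCechUnit x ∈ zetaSet X), g ⟨stoneCechUnit x, hx⟩ = e x :=
  zetaSet_largest_pseudocompactification_general X hlp
end

section
/- (Comfort) A Tychonoff space X is locally pseudocompact if and only if X ⊆ int_{βX} υX. -/
/-!
For `U ⊆ X`, both sides of the equivalence are governed by one property: every continuous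
real function on `X` is bounded on `U`. A zero-set of `βX` through a point of `cl_{βX} U`
that misses `X` is the zero-set of some `g` with `1 / g` continuous on `X` and unbounded on
`U`; conversely, if `f` is unbounded on `U`, the extension of `1 / (1 + |f|)` to `βX` has a
zero on the compact set `cl_{βX} U`, giving such a zero-set. For open `U`, boundedness of
`C(X)` on `U` is the same as pseudocompactness of `cl_X U`: a continuous function unbounded
on `cl_X U` yields a locally finite sequence of open sets `V n ⊆ U` on which it exceeds `n`,
and a locally finite sum of bump functions supported in the `V n` is unbounded on `U`.
-/

open Set Topology

section

variable {X : Type*} [TopologicalSpace X]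

def IsFunctionallyBounded (U : Set X) : Prop :=
  ∀ f : C(X, ℝ), ∃ M : ℝ, ∀ x ∈ U, |f x| ≤ M

lemma IsFunctionallyBounded.mono {U V : Set X} (hV : IsFunctionallyBounded V) (hUV : U ⊆ V) :
    IsFunctionallyBounded U := fun f =>
  (hV f).imp fun _ hM x hx => hM x (hUV hx)

lemma IsPseudocompactSet.isFunctionallyBounded {A : Set X} (hA : IsPseudocompactSet A) :
    IsFunctionallyBounded A := fun f =>
  (hA (f.restrict A)).imp fun _ hM x hx => hM ⟨x, hx⟩

lemma mem_upsilonSet_iff {p : StoneCech X} :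
    p ∈ upsilonSet X ↔
      ∀ g : C(StoneCech X, ℝ), (∀ x, g (stoneCechUnit x) ≠ 0) → g p ≠ 0 := by
  constructor
  · intro hp g hg hgp
    obtain ⟨_, hz, x, rfl⟩ := hp (g ⁻¹' {0}) ⟨g, rfl⟩ hgp
    exact hg x hz
  · rintro h Z ⟨g, rfl⟩ hpZ
    by_contra hZX
    exact h g (fun x hx => hZX ⟨_, hx, x, rfl⟩) hpZ

lemma exists_stoneCech_extension_of_mem_Icc {a b : ℝ} (f : C(X, ℝ))
    (hf : ∀ x, f x ∈ Icc a b) :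
    ∃ F : C(StoneCech X, ℝ), (∀ q, F q ∈ Icc a b) ∧ ∀ x, F (stoneCechUnit x) = f x := by
  have hfc : Continuous fun x => (⟨f x, hf x⟩ : Icc a b) := f.continuous.subtype_mk hf
  refine ⟨⟨fun q => (stoneCechExtend hfc q : Icc a b), continuous_subtype_val.comp
    (continuous_stoneCechExtend hfc)⟩, fun q => (stoneCechExtend hfc q).2, fun x => ?_⟩
  simp [stoneCechExtend_stoneCechUnit]

lemma IsFunctionallyBounded.closure_image_subset_upsilonSet {U : Set X}
    (hU : IsFunctionallyBounded U) :
    closure (stoneCechUnit '' U) ⊆ upsilonSet X := by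
  intro p hp
  rw [mem_upsilonSet_iff]
  intro g hg hgp
  let f : C(X, ℝ) := ⟨fun x => (g (stoneCechUnit x))⁻¹,
    (g.continuous.comp continuous_stoneCechUnit).inv₀ hg⟩
  obtain ⟨M, hM⟩ := hU f
  have hUM : stoneCechUnit '' U ⊆ {q | 1 ≤ |g q| * M} := by
    rintro _ ⟨x, hx, rfl⟩
    calc (1 : ℝ) = |g (stoneCechUnit x)| * |f x| := by
          simp [f, abs_inv, mul_inv_cancel₀ (abs_ne_zero.mpr (hg x))]
      _ ≤ |g (stoneCechUnit x)| * M := mul_le_mul_of_nonneg_left (hM x hx) (abs_nonneg _)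
  have hpM : 1 ≤ |g p| * M :=
    (isClosed_le continuous_const (g.continuous.abs.mul continuous_const)).closure_subset_iff.mpr
      hUM hp
  norm_num [hgp] at hpM

lemma isFunctionallyBounded_of_closure_image_subset_upsilonSet {U : Set X}
    (hU : closure (stoneCechUnit '' U) ⊆ upsilonSet X) : IsFunctionallyBounded U := by
  intro f
  rcases U.eq_empty_or_nonempty with rfl | ⟨x₀, hx₀⟩
  · exact ⟨0, by simp⟩
  have hpos : ∀ x, 0 < 1 / (1 + |f x|) := fun x => by positivity
  let h : C(X, ℝ) := ⟨fun x => 1 / (1 + |f x|),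
    continuous_const.div (continuous_const.add f.continuous.abs) fun x => by positivity⟩
  obtain ⟨F, hF01, hFh⟩ := exists_stoneCech_extension_of_mem_Icc (a := 0) (b := 1) h fun x =>
    ⟨(hpos x).le, div_le_one_of_le₀ (by linarith [abs_nonneg (f x)]) (by positivity)⟩
  obtain ⟨p, hpK, hpmin⟩ := isClosed_closure.isCompact.exists_isMinOn
    ⟨_, subset_closure (mem_image_of_mem _ hx₀)⟩ F.continuous.continuousOn
  have hFp : 0 < F p := lt_of_le_of_ne (hF01 p).1
    (mem_upsilonSet_iff.mp (hU hpK) F (fun x => by rw [hFh]; exact (hpos x).ne')).symm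
  refine ⟨1 / F p, fun x hx => ?_⟩
  have hFx : F p ≤ 1 / (1 + |f x|) := by
    simpa [hFh, h] using hpmin (subset_closure (mem_image_of_mem _ hx))
  rw [le_div_iff₀ (by positivity)] at hFx
  rw [le_div_iff₀ hFp]
  nlinarith

lemma closure_image_stoneCechUnit_subset_upsilonSet_iff {U : Set X} :
    closure (stoneCechUnit '' U) ⊆ upsilonSet X ↔ IsFunctionallyBounded U :=
  ⟨isFunctionallyBounded_of_closure_image_subset_upsilonSet,
    IsFunctionallyBounded.closure_image_subset_upsilonSet⟩

lemma dense_preimage_val_closure (U : Set X) :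
    Dense ((Subtype.val : closure U → X) ⁻¹' U) := by
  simp [Subtype.dense_iff, inter_eq_right.mpr subset_closure]

lemma locallyFinite_setOf_natCast_lt {f : X → ℝ} (hf : Continuous f) :
    LocallyFinite fun n : ℕ => {x | (n : ℝ) < f x} := by
  intro x
  refine ⟨{y | f y < f x + 1}, (isOpen_lt hf continuous_const).mem_nhds (by simp), ?_⟩
  refine (finite_Iio ⌈f x + 1⌉₊).subset ?_
  rintro n ⟨y, hny, hyx⟩
  exact Nat.lt_ceil.mpr (lt_trans hny hyx)

lemma LocallyFinite.of_preimage_val {ι : Type*} {A : Set X} (hA : IsClosed A) {V : ι → Set X}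
    (hVA : ∀ i, V i ⊆ A) (hV : LocallyFinite fun i => (Subtype.val : A → X) ⁻¹' V i) :
    LocallyFinite V := by
  intro x
  by_cases hx : x ∈ A
  · obtain ⟨t, ht, htfin⟩ := hV ⟨x, hx⟩
    obtain ⟨u, hu, hut⟩ := (mem_nhds_subtype A _ t).mp ht
    refine ⟨u, hu, htfin.subset ?_⟩
    rintro i ⟨y, hyV, hyu⟩
    exact ⟨⟨y, hVA i hyV⟩, hyV, hut hyu⟩
  · refine ⟨Aᶜ, hA.isOpen_compl.mem_nhds hx, finite_empty.subset ?_⟩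
    rintro i ⟨y, hyV, hyA⟩
    exact hyA (hVA i hyV)

lemma exists_forall_natCast_le_of_locallyFinite [CompletelyRegularSpace X] {V : ℕ → Set X}
    (hVo : ∀ n, IsOpen (V n)) (hV : LocallyFinite V) {a : ℕ → X} (ha : ∀ n, a n ∈ V n) :
    ∃ f : C(X, ℝ), ∀ n : ℕ, (n : ℝ) ≤ f (a n) := by
  choose e he hea heV using fun n =>
    CompletelyRegularSpace.completely_regular_isOpen (a n) (V n) (hVo n) (ha n)
  set t : ℕ → X → ℝ := fun n x => n * (1 - e n x)
  have ht_nonneg : ∀ n x, 0 ≤ t n x := fun n x =>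
    mul_nonneg n.cast_nonneg (sub_nonneg.mpr (e n x).2.2)
  have ht_supp : ∀ n, Function.support (t n) ⊆ V n := fun n x hx => by
    by_contra hxV
    exact hx (by simp [t, heV n hxV])
  have hsum := continuous_finsum (fun n => by fun_prop) (hV.subset ht_supp)
  refine ⟨⟨fun x => ∑ᶠ n, t n x, hsum⟩, fun n => ?_⟩
  calc (n : ℝ) = t n (a n) := by simp [t, hea n]
    _ ≤ ∑ᶠ m, t m (a n) := single_le_finsum n ((hV.point_finite (a n)).subset fun m hm =>
          ht_supp m hm) fun m => ht_nonneg m (a n)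

lemma IsFunctionallyBounded.isPseudocompactSet_closure [CompletelyRegularSpace X] {U : Set X}
    (hU : IsOpen U) (hb : IsFunctionallyBounded U) : IsPseudocompactSet (closure U) := by
  intro φ
  by_contra! hφ
  choose W hWo hWφ using fun n : ℕ =>
    isOpen_induced_iff.mp (isOpen_lt continuous_const φ.continuous.abs :
      IsOpen {y | (n : ℝ) < |φ y|})
  have hV : ∀ n, (U ∩ W n).Nonempty := fun n => by
    obtain ⟨y, hyφ, hyU⟩ := (dense_preimage_val_closure U).inter_open_nonempty _
      (isOpen_lt continuous_const φ.continuous.abs) (hφ n)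
    exact ⟨y, hyU, by rwa [← hWφ n] at hyφ⟩
  choose a ha using hV
  have hlf : LocallyFinite fun n => U ∩ W n :=
    LocallyFinite.of_preimage_val isClosed_closure (fun _ => inter_subset_left.trans subset_closure)
      ((locallyFinite_setOf_natCast_lt φ.continuous.abs).subset fun n y hy =>
        hWφ n ▸ hy.2)
  obtain ⟨f, hf⟩ := exists_forall_natCast_le_of_locallyFinite (fun n => hU.inter (hWo n)) hlf ha
  obtain ⟨M, hM⟩ := hb f
  obtain ⟨n, hn⟩ := exists_nat_gt M
  linarith [hM (a n) (ha n).1, hf n, le_abs_self (f (a n))]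

lemma isPseudocompactSet_closure_iff_closure_image_subset_upsilonSet [CompletelyRegularSpace X]
    {U : Set X} (hU : IsOpen U) :
    IsPseudocompactSet (closure U) ↔ closure (stoneCechUnit '' U) ⊆ upsilonSet X := by
  rw [closure_image_stoneCechUnit_subset_upsilonSet_iff]
  exact ⟨fun h => h.isFunctionallyBounded.mono subset_closure,
    IsFunctionallyBounded.isPseudocompactSet_closure hU⟩

end

theorem comfort_locallyPseudocompact_iff_general (X : Type*) [TopologicalSpace X]
    [CompletelyRegularSpace X] :
    (∀ x : X, ∃ U : Set X, IsOpen U ∧ x ∈ U ∧ IsPseudocompactSet (closure U)) ↔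
      Set.range (stoneCechUnit : X → StoneCech X) ⊆ interior (upsilonSet X) := by
  constructor
  · rintro hloc _ ⟨x, rfl⟩
    obtain ⟨U, hU, hxU, hUps⟩ := hloc x
    have hxβ : closure (stoneCechUnit '' U) ∈ 𝓝 (stoneCechUnit x) :=
      isDenseInducing_stoneCechUnit.closure_image_mem_nhds (hU.mem_nhds hxU)
    exact interior_mono
      ((isPseudocompactSet_closure_iff_closure_image_subset_upsilonSet hU).mp hUps)
      (mem_interior_iff_mem_nhds.mpr hxβ)
  · intro hsub x
    obtain ⟨C, ⟨hCx, hC⟩, hCυ⟩ :=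
      (closed_nhds_basis _).mem_iff.mp (isOpen_interior.mem_nhds (hsub ⟨x, rfl⟩))
    have hU : IsOpen (stoneCechUnit ⁻¹' interior C) :=
      isOpen_interior.preimage continuous_stoneCechUnit
    refine ⟨_, hU, mem_interior_iff_mem_nhds.mpr hCx,
      (isPseudocompactSet_closure_iff_closure_image_subset_upsilonSet hU).mpr ?_⟩
    calc closure (stoneCechUnit '' (stoneCechUnit ⁻¹' interior C))
        ⊆ C := closure_minimal ((image_preimage_subset _ _).trans interior_subset) hC
      _ ⊆ upsilonSet X := hCυ.trans interior_subset

/-- (Comfort) A Tychonoff space `X` is locally pseudocompact if and only if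
`X ⊆ int_{βX} υX`. -/
theorem comfort_locallyPseudocompact_iff (X : Type*) [TopologicalSpace X] [T2Space X]
    [CompletelyRegularSpace X] :
    (∀ x : X, ∃ U : Set X, IsOpen U ∧ x ∈ U ∧ IsPseudocompactSet (closure U)) ↔
      Set.range (stoneCechUnit : X → StoneCech X) ⊆ interior (upsilonSet X) :=
  comfort_locallyPseudocompact_iff_general X
end
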